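/- arXiv:1508.04628 — 6 statements merged into one kernel-verified Lean document; each statement's English description precedes it below -/
import Mathlib

section
/- Let Y be the 6×6 {0,1}-matrix with rows (1,1,1,1,0,0), (1,1,1,0,1,0), (1,1,1,0,0,1), (0,1,1,0,0,0), (1,0,1,0,0,0), (1,1,0,0,0,0). Then for every r ≥ 1, every r×6 matrix X whose rows are all chosen among the rows of Y, and every probability row vector R of length r, there exists a Dirac-weight vector W of length 6 such that R·X·W > 1/2. -/
/-- A Dirac-weight vector: exactly one entry `1`, exactly one entry `-1`,
all other entries `0`. -/
def DiracWeight {m : ℕ} (W : Fin m → ℝ) : Prop :=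
  ∃ i j : Fin m, i ≠ j ∧ W i = 1 ∧ W j = -1 ∧ ∀ k, k ≠ i → k ≠ j → W k = 0

/-- The 6×6 matrix from the paper. -/
def Ymat : Matrix (Fin 6) (Fin 6) ℝ :=
  !![1, 1, 1, 1, 0, 0;
     1, 1, 1, 0, 1, 0;
     1, 1, 1, 0, 0, 1;
     0, 1, 1, 0, 0, 0;
     1, 0, 1, 0, 0, 0;
     1, 1, 0, 0, 0, 0]

/-!
Every row `y` of `Ymat` satisfies `(y₀ - y₃) + (y₁ - y₄) + (y₂ - y₅) = 2`. This linear identity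
survives affine combinations, so it holds for `R X` as well; one of the three differences is
then at least `2/3 > 1/2`, and it is the pairing of `R X` with the Dirac weight `e_p - e_{p+3}`.
-/

open Matrix

lemma diracWeight_single_sub_single {m : ℕ} {i j : Fin m} (hij : i ≠ j) :
    DiracWeight (Pi.single i 1 - Pi.single j 1 : Fin m → ℝ) :=
  ⟨i, j, hij, by simp [hij], by simp [hij.symm], fun k hki hkj => by simp [hki, hkj]⟩

lemma Matrix.vecMul_dotProduct_eq_of_forall_dotProduct_eq {α ι κ : Type*} [CommSemiring α]
    [Fintype ι] [Fintype κ] (R : ι → α) (X : Matrix ι κ α) (w : κ → α) (c : α)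
    (hX : ∀ i, X i ⬝ᵥ w = c) (hR : ∑ i, R i = 1) : R ᵥ* X ⬝ᵥ w = c := by
  have hXw : X *ᵥ w = fun _ => c := funext hX
  rw [← dotProduct_mulVec, hXw]
  simp [dotProduct, ← Finset.sum_mul, hR]

def pairedDiracWeight (p : Fin 3) : Fin 6 → ℝ :=
  Pi.single (Fin.castAdd 3 p) 1 - Pi.single (Fin.natAdd 3 p) 1

lemma diracWeight_pairedDiracWeight (p : Fin 3) : DiracWeight (pairedDiracWeight p) :=
  diracWeight_single_sub_single (by fin_cases p <;> decide)

lemma sum_pairedDiracWeight : ∑ p, pairedDiracWeight p = ![1, 1, 1, -1, -1, -1] := by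
  ext j
  simp only [Finset.sum_apply, Fin.sum_univ_three, pairedDiracWeight, Pi.sub_apply,
    Pi.single_apply]
  fin_cases j <;> norm_num [Fin.ext_iff]

lemma Ymat_dotProduct_sum_pairedDiracWeight (k : Fin 6) :
    Ymat k ⬝ᵥ ∑ p, pairedDiracWeight p = 2 := by
  rw [sum_pairedDiracWeight]
  fin_cases k <;> norm_num [Ymat, dotProduct, Fin.sum_univ_succ]

theorem stmt1_general (r : ℕ) (X : Matrix (Fin r) (Fin 6) ℝ)
    (hrows : ∀ i : Fin r, ∃ k : Fin 6, ∀ j : Fin 6, X i j = Ymat k j)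
    (R : Fin r → ℝ) (hR1 : ∑ i, R i = 1) :
    ∃ W : Fin 6 → ℝ, DiracWeight W ∧
      1 / 2 < ∑ j, (∑ i, R i * X i j) * W j := by
  have hX : ∀ i, X i ⬝ᵥ ∑ p, pairedDiracWeight p = 2 := fun i => by
    obtain ⟨k, hk⟩ := hrows i
    rw [funext hk]
    exact Ymat_dotProduct_sum_pairedDiracWeight k
  have hsum : ∑ p, R ᵥ* X ⬝ᵥ pairedDiracWeight p = 2 := by
    rw [← dotProduct_sum]
    exact vecMul_dotProduct_eq_of_forall_dotProduct_eq R X _ 2 hX hR1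
  obtain ⟨p, -, hp⟩ := Finset.exists_lt_of_sum_lt (s := Finset.univ) (f := fun _ => (1 / 2 : ℝ))
    (by rw [hsum]; norm_num)
  exact ⟨pairedDiracWeight p, diracWeight_pairedDiracWeight p, hp⟩

theorem stmt1 (r : ℕ) (hr : 1 ≤ r) (X : Matrix (Fin r) (Fin 6) ℝ)
    (hrows : ∀ i : Fin r, ∃ k : Fin 6, ∀ j : Fin 6, X i j = Ymat k j)
    (R : Fin r → ℝ) (hR0 : ∀ i, 0 ≤ R i) (hR1 : ∑ i, R i = 1) :
    ∃ W : Fin 6 → ℝ, DiracWeight W ∧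
      1 / 2 < ∑ j, (∑ i, R i * X i j) * W j :=
  stmt1_general r X hrows R hR1
end

section
/- Let B and C be finite graphs and r ≥ 2 an integer such that m(C) < (1/2)·r·η*(B), where m(C) = max over nonempty subgraphs D ⊆ C of e(D)/v(D) (edge count over vertex count), and η*(B) = max over nonempty subgraphs B' ⊆ B of the minimum vertex degree of B'. Then there exists an r-coloring of the vertices of C such that no subgraph of C isomorphic to B has all its vertices monochromatic. -/
/-!
If every vertex set `D` of `C` spans fewer than `r d |D| / 2` edges, then every nonempty `D`
contains a vertex with fewer than `r d` neighbours in `D`. Colour greedily in reverse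
degeneracy order: when a vertex is added, fewer than `r d` of its neighbours are already
coloured, so some colour occurs fewer than `d` times among them. Every colour class then again
has a vertex of degree `< d` in each of its nonempty subsets, whereas an injective copy of `B`
carries the set `S` of minimum degree `≥ d` onto a monochromatic set without such a vertex.
-/

open Finset

/-- The number of edges of the graph `G` with both endpoints in the
vertex set `X`. -/
def edgesIn {V : Type*} [Fintype V] [DecidableEq V] (G : SimpleGraph V)
    [DecidableRel G.Adj] (X : Finset V) : ℕ :=
  (G.edgeFinset.filter (fun e => ∃ a ∈ X, ∃ b ∈ X, e = s(a, b))).card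

namespace SimpleGraph

variable {W : Type*} (G : SimpleGraph W) [DecidableRel G.Adj]

/-- The subgraph induced on `s` is `(k - 1)`-degenerate. -/
def DegenerateOn (s : Set W) (k : ℕ) : Prop :=
  ∀ D : Finset W, ↑D ⊆ s → D.Nonempty → ∃ w ∈ D, #{u ∈ D | G.Adj w u} < k

variable {G}

theorem DegenerateOn.mono {s t : Set W} {k : ℕ} (h : G.DegenerateOn t k) (hst : s ⊆ t) :
    G.DegenerateOn s k :=
  fun D hD hne => h D (hD.trans hst) hne

variable [DecidableEq W]

theorem exists_coloring_degenerateOn_fiber {α : Type*} [Fintype α] [Nonempty α] {d : ℕ}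
    (D : Finset W) (hD : G.DegenerateOn ↑D (Fintype.card α * d)) :
    ∃ c : W → α, ∀ i, G.DegenerateOn (↑D ∩ c ⁻¹' {i}) d := by
  classical
  induction D using Finset.strongInduction with
  | H D ih =>
  rcases D.eq_empty_or_nonempty with rfl | hne
  · refine ⟨fun _ => Classical.arbitrary α, fun i T hT hTne => ?_⟩
    simp only [coe_empty, Set.empty_inter, Set.subset_empty_iff, coe_eq_empty] at hT
    exact absurd hT hTne.ne_empty
  obtain ⟨w₀, hw₀, hdeg⟩ := hD D subset_rfl hne
  obtain ⟨c', hc'⟩ := ih (D.erase w₀) (erase_ssubset hw₀) (hD.mono (by simp))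
  have hN : #{u ∈ D.erase w₀ | G.Adj w₀ u} < #(univ : Finset α) * d := by
    rw [card_univ]
    exact (card_le_card (filter_subset_filter _ (erase_subset _ _))).trans_lt hdeg
  obtain ⟨i, -, hi⟩ := exists_card_fiber_lt_of_card_lt_mul (f := c') hN
  refine ⟨Function.update c' w₀ i, fun j T hT hTne => ?_⟩
  have hTD : T ⊆ D := fun x hx => (hT hx).1
  have hTj : ∀ x ∈ T, Function.update c' w₀ i x = j := fun x hx => (hT hx).2
  by_cases hw₀T : w₀ ∈ T
  · -- `w₀` itself has fewer than `d` neighbours of its own colour `i`.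
    refine ⟨w₀, hw₀T, (card_le_card fun u hu => ?_).trans_lt hi⟩
    rw [mem_filter] at hu
    have hu₀ : u ≠ w₀ := (G.ne_of_adj hu.2).symm
    have hcu : c' u = i := by
      simpa [hu₀, Function.update_self] using (hTj u hu.1).trans (hTj w₀ hw₀T).symm
    simp only [mem_filter, mem_erase]
    exact ⟨⟨⟨hu₀, hTD hu.1⟩, hu.2⟩, hcu⟩
  · refine hc' j T (fun x hx => ?_) hTne
    have hx₀ : x ≠ w₀ := fun h => hw₀T (h ▸ hx)
    refine ⟨mem_erase.mpr ⟨hx₀, hTD hx⟩, ?_⟩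
    simpa [Function.update_of_ne hx₀] using hTj x hx

variable [Fintype W]

theorem sum_card_filter_adj_le_two_mul_edgesIn (D : Finset W) :
    ∑ v ∈ D, #{u ∈ D | G.Adj v u} ≤ 2 * edgesIn G D := by
  have hpairs : ∑ v ∈ D, #{u ∈ D | G.Adj v u} = #{p ∈ D ×ˢ D | G.Adj p.1 p.2} := by
    simp only [card_filter, sum_product]
  rw [hpairs]
  refine card_le_mul_card_image_of_maps_to (f := fun p : W × W => s(p.1, p.2))
    (fun p hp => ?_) 2 fun e _ => ?_
  · simp only [mem_filter, mem_product] at hp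
    simp only [mem_filter, mem_edgeFinset]
    exact ⟨hp.2, p.1, hp.1.1, p.2, hp.1.2, rfl⟩
  · induction e using Sym2.ind with
    | h x y =>
    calc #{p ∈ {p ∈ D ×ˢ D | G.Adj p.1 p.2} | s(p.1, p.2) = s(x, y)}
        ≤ #({(x, y), (y, x)} : Finset (W × W)) := card_le_card fun ⟨a, b⟩ hp => by
          rcases Sym2.eq_iff.mp (mem_filter.mp hp).2 with ⟨rfl, rfl⟩ | ⟨rfl, rfl⟩ <;> simp
      _ ≤ 2 := card_le_two

theorem exists_card_filter_adj_lt_of_edgesIn_lt {D : Finset W} {k : ℕ}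
    (h : 2 * edgesIn G D < k * #D) : ∃ w ∈ D, #{u ∈ D | G.Adj w u} < k := by
  by_contra! hdeg
  have : k * #D ≤ 2 * edgesIn G D :=
    calc k * #D = ∑ _v ∈ D, k := by rw [sum_const, smul_eq_mul, mul_comm]
      _ ≤ ∑ v ∈ D, #{u ∈ D | G.Adj v u} := sum_le_sum hdeg
      _ ≤ 2 * edgesIn G D := sum_card_filter_adj_le_two_mul_edgesIn D
  omega

end SimpleGraph

theorem SimpleGraph.Hom.card_filter_adj_le_card_filter_adj_image {V W : Type*} [DecidableEq W]
    {B : SimpleGraph V} {C : SimpleGraph W} [DecidableRel B.Adj] [DecidableRel C.Adj]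
    (f : B →g C) (hf : Function.Injective f) (S : Finset V) (v : V) :
    #{u ∈ S | B.Adj v u} ≤ #{u ∈ S.image f | C.Adj (f v) u} := by
  rw [← card_image_of_injective _ hf]
  refine card_le_card fun u hu => ?_
  obtain ⟨a, ha, rfl⟩ := mem_image.mp hu
  rw [mem_filter] at ha ⊢
  exact ⟨mem_image_of_mem f ha.1, f.map_adj ha.2⟩

open SimpleGraph in
/-- if `m(C) < (1/2)·r·η*(B)` then there is a vertex `r`-coloring
of `C` with no monochromatic copy of `B`.  The hypothesis is expressed by a
nonempty vertex set `S` of `B` (witnessing `η*(B)`) whose minimum degree in the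
induced subgraph is at least `d`, such that every nonempty `D ⊆ C` has density
`e(D)/v(D) < (1/2)·r·d`. -/
theorem stmt3 {V W : Type*} [Fintype V] [Fintype W] [DecidableEq V] [DecidableEq W]
    (B : SimpleGraph V) (C : SimpleGraph W)
    [DecidableRel B.Adj] [DecidableRel C.Adj]
    (r : ℕ) (hr : 2 ≤ r) (d : ℕ) (S : Finset V) (hS : S.Nonempty)
    (hd : ∀ v ∈ S, d ≤ (S.filter (fun w => B.Adj v w)).card)
    (hm : ∀ D : Finset W, D.Nonempty →
      (edgesIn C D : ℝ) / (D.card : ℝ) < (1 / 2) * (r : ℝ) * (d : ℝ)) :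
    ∃ c : W → Fin r, ∀ f : B →g C, Function.Injective f →
      ¬ ∀ v w : V, c (f v) = c (f w) := by
  have hC : C.DegenerateOn ↑(univ : Finset W) (Fintype.card (Fin r) * d) := by
    intro D _ hne
    refine exists_card_filter_adj_lt_of_edgesIn_lt ?_
    have hdens := hm D hne
    rw [div_lt_iff₀ (by exact_mod_cast hne.card_pos)] at hdens
    rw [Fintype.card_fin]
    exact_mod_cast (by linarith : (2 * edgesIn C D : ℝ) < r * d * #D)
  have : Nonempty (Fin r) := ⟨⟨0, by omega⟩⟩
  obtain ⟨c, hc⟩ := exists_coloring_degenerateOn_fiber univ hC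
  refine ⟨c, fun f hf hmono => ?_⟩
  obtain ⟨v₀, hv₀⟩ := hS
  obtain ⟨w, hw, hdeg⟩ := hc (c (f v₀)) (S.image f) (fun w hw => by
    obtain ⟨v, -, rfl⟩ := mem_image.mp hw
    exact ⟨mem_univ _, hmono v v₀⟩) ⟨f v₀, mem_image_of_mem f hv₀⟩
  obtain ⟨v, hv, rfl⟩ := mem_image.mp hw
  have hcopy := f.card_filter_adj_le_card_filter_adj_image hf S v
  exact absurd hdeg (not_lt.mpr ((hd v hv).trans hcopy))
end

section
/- Let α ≥ 1 be a real number, r an integer with r > α, A a single-vertex graph, and L a cycle graph on n ≥ 3 vertices. Then for every finite graph C all of whose subgraphs B satisfy α·v(B) − e(B) ≥ 0, there is an r-coloring of the vertices of C with no monochromatic copy of the cycle L. (Hence the class K_α⁺ fails the one-point Ramsey property.) -/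
open Finset

section aux
variable {V : Type*} [Fintype V] [DecidableEq V] (G : SimpleGraph V) [DecidableRel G.Adj]

lemma edgesIn_mono {X Y : Finset V} (h : X ⊆ Y) : edgesIn G X ≤ edgesIn G Y := by
  apply Finset.card_le_card
  intro e he
  obtain ⟨he1, a, ha, b, hb, rfl⟩ := Finset.mem_filter.1 he
  exact Finset.mem_filter.2 ⟨he1, a, h ha, b, h hb, rfl⟩

lemma edgesIn_empty : edgesIn G (∅ : Finset V) = 0 := by
  simp [edgesIn]

/-- handshake inequality -/
lemma sum_deg_le (S : Finset V) :
    ∑ v ∈ S, (S.filter (G.Adj v)).card ≤ 2 * edgesIn G S := by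
  classical
  set P := (S ×ˢ S).filter (fun p => G.Adj p.1 p.2) with hP
  have h1 : ∑ v ∈ S, (S.filter (G.Adj v)).card = P.card := by
    rw [Finset.card_eq_sum_card_fiberwise (f := Prod.fst) (t := S)
      (fun x hx => (Finset.mem_product.1 (Finset.mem_filter.1 hx).1).1)]
    apply Finset.sum_congr rfl
    intro v hv
    have key : P.filter (fun p => p.1 = v) = (S.filter (G.Adj v)).image (fun b => (v, b)) := by
      ext ⟨a, b⟩
      simp only [hP, Finset.mem_filter, Finset.mem_product, Finset.mem_image]
      constructor
      · rintro ⟨⟨⟨ha, hb⟩, hadj⟩, rfl⟩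
        exact ⟨b, ⟨hb, hadj⟩, rfl⟩
      · rintro ⟨x, ⟨hx, hadj⟩, h⟩
        obtain ⟨rfl, rfl⟩ : v = a ∧ x = b := by
          have := Prod.mk.injEq v x a b ▸ h
          exact ⟨this.1, this.2⟩
        exact ⟨⟨⟨hv, hx⟩, hadj⟩, rfl⟩
    rw [key, Finset.card_image_of_injective _ (fun x y hxy => (Prod.mk.injEq .. ▸ hxy).2)]
  rw [h1]
  have h2 : P.card ≤ 2 * (P.image (fun p => s(p.1, p.2))).card := by
    apply Finset.card_le_mul_card_image
    intro e he
    induction e using Sym2.inductionOn with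
    | hf a b =>
      have : P.filter (fun p => s(p.1, p.2) = s(a, b)) ⊆ {(a, b), (b, a)} := by
        intro p hp
        have := (Finset.mem_filter.1 hp).2
        rw [Sym2.eq_iff] at this
        rcases this with ⟨h1, h2⟩ | ⟨h1, h2⟩
        · simp [Prod.ext_iff, h1, h2]
        · simp [Prod.ext_iff, h1, h2]
      calc (P.filter (fun p => s(p.1, p.2) = s(a, b))).card ≤ _ := Finset.card_le_card this
        _ ≤ 2 := Finset.card_insert_le _ _ |>.trans (by simp)
  refine h2.trans (Nat.mul_le_mul_left 2 ?_)
  apply Finset.card_le_card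
  intro e he
  obtain ⟨p, hp, rfl⟩ := Finset.mem_image.1 he
  obtain ⟨hmem, hadj⟩ := Finset.mem_filter.1 hp
  obtain ⟨h1, h2⟩ := Finset.mem_product.1 hmem
  exact Finset.mem_filter.2 ⟨SimpleGraph.mem_edgeFinset.2 hadj, p.1, h1, p.2, h2, rfl⟩

/-- removing a vertex -/
lemma edgesIn_erase {X : Finset V} {v : V} (hv : v ∈ X) :
    edgesIn G X ≤ edgesIn G (X.erase v) + ((X.erase v).filter (G.Adj v)).card := by
  classical
  have hsub : G.edgeFinset.filter (fun e => ∃ a ∈ X, ∃ b ∈ X, e = s(a, b)) ⊆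
      (G.edgeFinset.filter (fun e => ∃ a ∈ X.erase v, ∃ b ∈ X.erase v, e = s(a, b))) ∪
      ((X.erase v).filter (G.Adj v)).image (fun b => s(v, b)) := by
    intro e he
    obtain ⟨hedge, a, ha, b, hb, rfl⟩ := Finset.mem_filter.1 he
    have hadj : G.Adj a b := (SimpleGraph.mem_edgeSet G).1 (SimpleGraph.mem_edgeFinset.1 hedge)
    rcases eq_or_ne a v with rfl | hav
    · have hbv : b ≠ a := hadj.ne'
      exact Finset.mem_union_right _ (Finset.mem_image.2
        ⟨b, Finset.mem_filter.2 ⟨Finset.mem_erase.2 ⟨hbv, hb⟩, hadj⟩, rfl⟩)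
    · rcases eq_or_ne b v with rfl | hbv
      · refine Finset.mem_union_right _ (Finset.mem_image.2
          ⟨a, Finset.mem_filter.2 ⟨Finset.mem_erase.2 ⟨hav, ha⟩, hadj.symm⟩, ?_⟩)
        rw [Sym2.eq_swap]
      · exact Finset.mem_union_left _ (Finset.mem_filter.2 ⟨hedge,
          a, Finset.mem_erase.2 ⟨hav, ha⟩, b, Finset.mem_erase.2 ⟨hbv, hb⟩, rfl⟩)
  refine (Finset.card_le_card hsub).trans ((Finset.card_union_le _ _).trans ?_)
  exact Nat.add_le_add le_rfl Finset.card_image_le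

lemma exists_good_coloring (α : ℝ) (hα : 1 ≤ α) (r : ℕ) (hr : (α : ℝ) < (r : ℝ))
    (hK : ∀ D : Finset V, 0 ≤ α * (D.card : ℝ) - (edgesIn G D : ℝ)) :
    ∀ (m : ℕ) (S : Finset V), S.card ≤ m →
      ∃ c : V → Fin r, ∀ X ⊆ S, X.Nonempty →
        (∀ x ∈ X, ∀ y ∈ X, c x = c y) → edgesIn G X < X.card := by
  have hr0 : 0 < r := by
    have : (0 : ℝ) < r := lt_of_lt_of_le zero_lt_one (hα.trans hr.le)
    exact_mod_cast this
  intro m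
  induction m with
  | zero =>
    intro S hS
    refine ⟨fun _ => ⟨0, hr0⟩, fun X hX hXne _ => absurd (Finset.card_le_card hX) ?_⟩
    have := hXne.card_pos
    omega
  | succ m ih =>
    intro S hS
    rcases S.eq_empty_or_nonempty with rfl | hSne
    · refine ⟨fun _ => ⟨0, hr0⟩, fun X hX hXne _ => ?_⟩
      rw [Finset.subset_empty.1 hX] at hXne
      exact absurd hXne (by simp)
    -- find low degree vertex
    have hv : ∃ v ∈ S, (S.filter (G.Adj v)).card < 2 * r := by
      by_contra hcon
      push_neg at hcon
      have hsum : 2 * r * S.card ≤ ∑ v ∈ S, (S.filter (G.Adj v)).card := by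
        rw [mul_comm (2 * r) S.card]
        calc S.card * (2 * r) = ∑ _v ∈ S, 2 * r := by rw [Finset.sum_const, smul_eq_mul]
          _ ≤ _ := Finset.sum_le_sum hcon
      have h1 : 2 * r * S.card ≤ 2 * edgesIn G S := hsum.trans (sum_deg_le G S)
      have h1' : 2 * (r * S.card) ≤ 2 * edgesIn G S := by rw [← mul_assoc]; exact h1
      have h2 : r * S.card ≤ edgesIn G S := Nat.le_of_mul_le_mul_left h1' (by norm_num)
      have h3 : (edgesIn G S : ℝ) ≤ α * S.card := by linarith [hK S]
      have h4 : ((r : ℝ) * S.card) ≤ (edgesIn G S : ℝ) := by exact_mod_cast h2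
      have h5 : (0 : ℝ) < S.card := by exact_mod_cast hSne.card_pos
      nlinarith
    obtain ⟨v, hvS, hvdeg⟩ := hv
    have hcard : (S.erase v).card ≤ m := by
      have := Finset.card_erase_of_mem hvS
      have := hSne.card_pos
      omega
    obtain ⟨c, hc⟩ := ih (S.erase v) hcard
    set T := (S.erase v).filter (G.Adj v) with hT
    have hTcard : T.card < 2 * r := by
      refine lt_of_le_of_lt (Finset.card_le_card ?_) hvdeg
      exact Finset.filter_subset_filter _ (Finset.erase_subset _ _)
    have hk : ∃ k : Fin r, (T.filter (fun b => c b = k)).card ≤ 1 := by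
      by_contra hcon
      push_neg at hcon
      have : T.card = ∑ k : Fin r, (T.filter (fun b => c b = k)).card :=
        Finset.card_eq_sum_card_fiberwise (fun x _ => Finset.mem_univ (c x))
      have h2 : ∑ k : Fin r, (T.filter (fun b => c b = k)).card ≥ ∑ _k : Fin r, 2 :=
        Finset.sum_le_sum (fun k _ => hcon k)
      simp only [Finset.sum_const, Finset.card_univ, Fintype.card_fin, smul_eq_mul] at h2
      omega
    obtain ⟨k, hk⟩ := hk
    refine ⟨Function.update c v k, fun X hX hXne hmono => ?_⟩
    by_cases hvX : v ∈ X
    · -- all of X has color k under update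
      have hcol : ∀ x ∈ X.erase v, c x = k := by
        intro x hx
        obtain ⟨hxv, hxX⟩ := Finset.mem_erase.1 hx
        have := hmono x hxX v hvX
        rwa [Function.update_of_ne hxv, Function.update_self] at this
      have hYsub : X.erase v ⊆ S.erase v := Finset.erase_subset_erase v hX
      have hfil : (X.erase v).filter (G.Adj v) ⊆ T.filter (fun b => c b = k) := by
        intro b hb
        obtain ⟨hb1, hb2⟩ := Finset.mem_filter.1 hb
        exact Finset.mem_filter.2 ⟨Finset.mem_filter.2 ⟨hYsub hb1, hb2⟩, hcol b hb1⟩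
      have hle := edgesIn_erase G hvX
      have hle2 : ((X.erase v).filter (G.Adj v)).card ≤ 1 :=
        (Finset.card_le_card hfil).trans hk
      rcases (X.erase v).eq_empty_or_nonempty with hY | hY
      · rw [hY, edgesIn_empty] at hle
        simp only [hY, Finset.filter_empty, Finset.card_empty] at hle
        have := hXne.card_pos
        omega
      · have hlt : edgesIn G (X.erase v) < (X.erase v).card := by
          refine hc _ hYsub hY fun x hx y hy => ?_
          rw [hcol x hx, hcol y hy]
        have hXc : (X.erase v).card < X.card := Finset.card_erase_lt_of_mem hvX
        omega
    · -- X avoids v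
      have hXsub : X ⊆ S.erase v := fun x hx =>
        Finset.mem_erase.2 ⟨fun h => hvX (by rwa [h] at hx), hX hx⟩
      refine hc X hXsub hXne fun x hx y hy => ?_
      have h1 := hmono x hx y hy
      rwa [Function.update_of_ne (fun h => hvX (by rwa [h] at hx)),
        Function.update_of_ne (fun h => hvX (by rwa [h] at hy))] at h1
end aux

/-- for `α ≥ 1`, `r > α` an integer and `L` a cycle on `n ≥ 3`
vertices, every finite graph `C` all of whose vertex subsets `D` satisfy
`α·|D| − e(D) ≥ 0` admits an `r`-coloring of its vertices with no
monochromatic copy of the cycle `L`. -/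
theorem stmt5 {W : Type*} [Fintype W] [DecidableEq W]
    (α : ℝ) (hα : 1 ≤ α) (r : ℕ) (hr : (α : ℝ) < (r : ℝ))
    (n : ℕ) (hn : 3 ≤ n)
    (C : SimpleGraph W) [DecidableRel C.Adj]
    (hK : ∀ D : Finset W, 0 ≤ α * (D.card : ℝ) - (edgesIn C D : ℝ)) :
    ∃ c : W → Fin r, ∀ f : SimpleGraph.cycleGraph n →g C, Function.Injective f →
      ¬ ∀ v w : Fin n, c (f v) = c (f w) := by
  obtain ⟨m, rfl⟩ : ∃ m, n = m + 3 := ⟨n - 3, by omega⟩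
  obtain ⟨c, hc⟩ := exists_good_coloring C α hα r hr hK (Fintype.card W)
    Finset.univ (le_of_eq (Finset.card_univ))
  refine ⟨c, fun f hf hmono => ?_⟩
  set X : Finset W := Finset.univ.image f with hX
  have hXcard : X.card = m + 3 := by
    rw [hX, Finset.card_image_of_injective _ hf, Finset.card_univ, Fintype.card_fin]
  have hXne : X.Nonempty := by
    rw [← Finset.card_pos, hXcard]; omega
  have hlt : edgesIn C X < X.card := by
    refine hc X (Finset.subset_univ X) hXne fun x hx y hy => ?_
    obtain ⟨i, _, rfl⟩ := Finset.mem_image.1 hx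
    obtain ⟨j, _, rfl⟩ := Finset.mem_image.1 hy
    exact hmono i j
  -- lower bound
  have hadj : ∀ i : Fin (m + 3), C.Adj (f i) (f (i + 1)) := by
    intro i
    apply f.map_adj
    rw [SimpleGraph.cycleGraph_adj]
    right
    rw [add_sub_cancel_left]
  have hinj : Function.Injective (fun i : Fin (m + 3) => s(f i, f (i + 1))) := by
    intro i j h
    simp only [Sym2.eq_iff] at h
    rcases h with ⟨h1, _⟩ | ⟨h1, h2⟩
    · exact hf h1
    · exfalso
      have e1 : i = j + 1 := hf h1
      have e2 : j = i + 1 := (hf h2).symm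
      rw [e1] at e2
      have hval := congrArg Fin.val e2
      have h1 : ((1 : Fin (m + 3)) : ℕ) = 1 := by simp
      simp only [Fin.add_def, Fin.val_mk, h1] at hval
      have hj := j.isLt
      rcases Nat.lt_or_ge (j.val + 1) (m + 3) with h | h
      · rw [Nat.mod_eq_of_lt h] at hval
        rcases Nat.lt_or_ge (j.val + 1 + 1) (m + 3) with h' | h'
        · rw [Nat.mod_eq_of_lt h'] at hval; omega
        · have he : j.val + 1 + 1 = m + 3 := by omega
          rw [he, Nat.mod_self] at hval; omega
      · have he : j.val + 1 = m + 3 := by omega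
        rw [he, Nat.mod_self] at hval
        rw [Nat.mod_eq_of_lt (by omega)] at hval
        omega
  have hE : (Finset.univ.image (fun i : Fin (m + 3) => s(f i, f (i + 1)))) ⊆
      C.edgeFinset.filter (fun e => ∃ a ∈ X, ∃ b ∈ X, e = s(a, b)) := by
    intro e he
    obtain ⟨i, _, rfl⟩ := Finset.mem_image.1 he
    refine Finset.mem_filter.2 ⟨SimpleGraph.mem_edgeFinset.2 (hadj i), f i, ?_, f (i + 1), ?_, rfl⟩
    · exact Finset.mem_image.2 ⟨i, Finset.mem_univ i, rfl⟩
    · exact Finset.mem_image.2 ⟨i + 1, Finset.mem_univ _, rfl⟩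
  have hge : m + 3 ≤ edgesIn C X := by
    calc m + 3 = (Finset.univ.image (fun i : Fin (m + 3) => s(f i, f (i + 1)))).card := by
          rw [Finset.card_image_of_injective _ hinj, Finset.card_univ, Fintype.card_fin]
      _ ≤ _ := Finset.card_le_card hE
  omega
end

section
/- Work with δ(X) = 2|X| − e(X) in a graph M. Let B_1,…,B_m (m ≥ 2) be finite subsets of M forming a cycle configuration: δ(B_i) = 3 for each i, δ((B_1 ∪ ⋯ ∪ B_{j-1}) ∩ B_j) ≥ 3 for 2 ≤ j < m, and δ((B_1 ∪ ⋯ ∪ B_{m-1}) ∩ B_m) ≥ 6. Then δ(B_1 ∪ ⋯ ∪ B_m) ≤ 0. -/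
open Finset

/-- The pre-dimension `δ(X) = 2·|X| − e(X)`. -/
noncomputable def predim2 {V : Type*} [Fintype V] [DecidableEq V] (G : SimpleGraph V)
    [DecidableRel G.Adj] (X : Finset V) : ℝ :=
  2 * (X.card : ℝ) - (edgesIn G X : ℝ)

lemma edgesIn_supermod {V : Type*} [Fintype V] [DecidableEq V] (G : SimpleGraph V)
    [DecidableRel G.Adj] (X Y : Finset V) :
    edgesIn G X + edgesIn G Y ≤ edgesIn G (X ∪ Y) + edgesIn G (X ∩ Y) := by
  classical
  unfold edgesIn
  set P : Finset V → Sym2 V → Prop := fun Z e => ∃ a ∈ Z, ∃ b ∈ Z, e = s(a, b) with hP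
  have hmono : ∀ (Z W : Finset V) (e : Sym2 V), Z ⊆ W → P Z e → P W e := by
    rintro Z W e hZW ⟨a, ha, b, hb, rfl⟩
    exact ⟨a, hZW ha, b, hZW hb, rfl⟩
  have hinter : ∀ e : Sym2 V, P X e → P Y e → P (X ∩ Y) e := by
    rintro e ⟨a, ha, b, hb, rfl⟩ ⟨c, hc, d, hd, he⟩
    rw [Sym2.eq_iff] at he
    rcases he with ⟨rfl, rfl⟩ | ⟨rfl, rfl⟩
    · exact ⟨a, mem_inter.2 ⟨ha, hc⟩, b, mem_inter.2 ⟨hb, hd⟩, rfl⟩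
    · exact ⟨a, mem_inter.2 ⟨ha, hd⟩, b, mem_inter.2 ⟨hb, hc⟩, rfl⟩
  set A := G.edgeFinset.filter (P X)
  set Bs := G.edgeFinset.filter (P Y)
  have h1 : A ∪ Bs ⊆ G.edgeFinset.filter (P (X ∪ Y)) := by
    intro e he
    rcases mem_union.1 he with h | h <;> rw [mem_filter] at h ⊢
    · exact ⟨h.1, hmono X (X ∪ Y) e subset_union_left h.2⟩
    · exact ⟨h.1, hmono Y (X ∪ Y) e subset_union_right h.2⟩
  have h2 : A ∩ Bs ⊆ G.edgeFinset.filter (P (X ∩ Y)) := by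
    intro e he
    rw [mem_inter, mem_filter, mem_filter] at he
    exact mem_filter.2 ⟨he.1.1, hinter e he.1.2 he.2.2⟩
  calc A.card + Bs.card = (A ∪ Bs).card + (A ∩ Bs).card :=
        (card_union_add_card_inter A Bs).symm
    _ ≤ _ := Nat.add_le_add (card_le_card h1) (card_le_card h2)

lemma predim2_submod {V : Type*} [Fintype V] [DecidableEq V] (G : SimpleGraph V)
    [DecidableRel G.Adj] (X Y : Finset V) :
    predim2 G (X ∪ Y) ≤ predim2 G X + predim2 G Y - predim2 G (X ∩ Y) := by
  unfold predim2
  have hc : (X ∪ Y).card + (X ∩ Y).card = X.card + Y.card :=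
    card_union_add_card_inter X Y
  have hc' : ((X ∪ Y).card : ℝ) + ((X ∩ Y).card : ℝ) = (X.card : ℝ) + (Y.card : ℝ) := by
    exact_mod_cast hc
  have he := edgesIn_supermod G X Y
  have he' : (edgesIn G X : ℝ) + (edgesIn G Y : ℝ) ≤
      (edgesIn G (X ∪ Y) : ℝ) + (edgesIn G (X ∩ Y) : ℝ) := by exact_mod_cast he
  nlinarith

/-- cycle configuration.  `B 0, …, B (m-1)` (indices shifted
from `B_1, …, B_m`) are finite sets with `δ(B i) = 3`, the intersection of
each `B j` (for `1 ≤ j < m − 1`) with the union of the previous ones has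
pre-dimension at least `3`, and the intersection of the last set `B (m-1)`
with the union of the previous ones has pre-dimension at least `6`.
Then `δ(B 0 ∪ ⋯ ∪ B (m-1)) ≤ 0`. -/
theorem stmt11 {V : Type*} [Fintype V] [DecidableEq V] (M : SimpleGraph V)
    [DecidableRel M.Adj] (m : ℕ) (hm : 2 ≤ m) (B : ℕ → Finset V)
    (hδ : ∀ i < m, predim2 M (B i) = 3)
    (hmid : ∀ j, 1 ≤ j → j < m - 1 →
      3 ≤ predim2 M (((Finset.range j).biUnion B) ∩ B j))
    (hlast : 6 ≤ predim2 M (((Finset.range (m - 1)).biUnion B) ∩ B (m - 1))) :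
    predim2 M ((Finset.range m).biUnion B) ≤ 0 := by
  classical
  -- the unions of the first j sets
  have key : ∀ j, 1 ≤ j → j ≤ m - 1 → predim2 M ((Finset.range j).biUnion B) ≤ 3 := by
    intro j
    induction j with
    | zero => omega
    | succ k ih =>
      intro _ hk
      rcases Nat.eq_zero_or_pos k with rfl | hk1
      · simp only [zero_add, Finset.range_one, Finset.singleton_biUnion]
        exact le_of_eq (hδ 0 (by omega))
      · have hk2 : k ≤ m - 1 := by omega
        have ihk := ih hk1 hk2
        have hsub := predim2_submod M ((Finset.range k).biUnion B) (B k)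
        rw [Finset.range_add_one, Finset.biUnion_insert, Finset.union_comm]
        have h1 : predim2 M (B k) = 3 := hδ k (by omega)
        have h2 : 3 ≤ predim2 M (((Finset.range k).biUnion B) ∩ B k) :=
          hmid k hk1 (by omega)
        linarith
  have hU : predim2 M ((Finset.range (m - 1)).biUnion B) ≤ 3 :=
    key (m - 1) (by omega) le_rfl
  have hsub := predim2_submod M ((Finset.range (m - 1)).biUnion B) (B (m - 1))
  have hlasteq : predim2 M (B (m - 1)) = 3 := hδ (m - 1) (by omega)
  have hrw : (Finset.range m).biUnion B =
      ((Finset.range (m - 1)).biUnion B) ∪ B (m - 1) := by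
    have : m = (m - 1) + 1 := by omega
    nth_rewrite 1 [this]
    rw [Finset.range_add_one, Finset.biUnion_insert, Finset.union_comm]
  rw [hrw]
  linarith
end

section
/- Fix α ≥ 1 and K_α⁺ with ≤_α as above. Then (K_α⁺, ≤_α) has the free-amalgamation property: if A, B, C ∈ K_α⁺ with B ∩ C = A, A ≤_α B, and A ≤_α C, then the free amalgam D = B ⊗_A C (vertex set B ∪ C, edges exactly those of B and of C) lies in K_α⁺, and B ≤_α D and C ≤_α D. -/
open Finset

/-- The pre-dimension `δ_α(X) = α·|X| − e(X)`. -/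
noncomputable def predim {V : Type*} [Fintype V] [DecidableEq V] (G : SimpleGraph V)
    [DecidableRel G.Adj] (α : ℝ) (X : Finset V) : ℝ :=
  α * (X.card : ℝ) - (edgesIn G X : ℝ)

/-- `A ≤_α B`: `A ⊆ B` and `δ_α(C) ≥ δ_α(A)` for every intermediate
`A ⊆ C ⊆ B`. -/
noncomputable def strongLe {V : Type*} [Fintype V] [DecidableEq V] (G : SimpleGraph V)
    [DecidableRel G.Adj] (α : ℝ) (A B : Finset V) : Prop :=
  A ⊆ B ∧ ∀ C : Finset V, A ⊆ C → C ⊆ B → predim G α A ≤ predim G α C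

section Aux
variable {V : Type*} [Fintype V] [DecidableEq V] (M : SimpleGraph V) [DecidableRel M.Adj]

def eset (X : Finset V) : Finset (Sym2 V) :=
  M.edgeFinset.filter (fun e => ∃ a ∈ X, ∃ b ∈ X, e = s(a, b))

lemma edgesIn_eq (X : Finset V) : edgesIn M X = (eset M X).card := rfl

lemma eset_mono {X Y : Finset V} (h : X ⊆ Y) : eset M X ⊆ eset M Y := by
  intro e he
  rw [eset, mem_filter] at he ⊢
  obtain ⟨he1, a, ha, b, hb, rfl⟩ := he
  exact ⟨he1, a, h ha, b, h hb, rfl⟩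

lemma eset_inter (X Y : Finset V) :
    eset M (X ∩ Y) = eset M X ∩ eset M Y := by
  ext e
  simp only [eset, Finset.mem_inter, mem_filter]
  constructor
  · rintro ⟨he, a, ha, b, hb, rfl⟩
    exact ⟨⟨he, a, ha.1, b, hb.1, rfl⟩, he, a, ha.2, b, hb.2, rfl⟩
  · rintro ⟨⟨he, a, haX, b, hbX, rfl⟩, -, a', haY, b', hbY, h⟩
    refine ⟨he, ?_⟩
    rcases Sym2.eq_iff.1 h with ⟨rfl, rfl⟩ | ⟨rfl, rfl⟩
    · exact ⟨a, ⟨haX, haY⟩, b, ⟨hbX, hbY⟩, rfl⟩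
    · exact ⟨a, ⟨haX, hbY⟩, b, ⟨hbX, haY⟩, rfl⟩

lemma edges_submod (X Y : Finset V) :
    edgesIn M X + edgesIn M Y ≤ edgesIn M (X ∪ Y) + edgesIn M (X ∩ Y) := by
  have h1 : eset M X ∪ eset M Y ⊆ eset M (X ∪ Y) :=
    Finset.union_subset (eset_mono M Finset.subset_union_left)
      (eset_mono M Finset.subset_union_right)
  have h2 := Finset.card_union_add_card_inter (eset M X) (eset M Y)
  simp only [edgesIn_eq, eset_inter]
  calc (eset M X).card + (eset M Y).card
      = (eset M X ∪ eset M Y).card + (eset M X ∩ eset M Y).card := h2.symm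
    _ ≤ (eset M (X ∪ Y)).card + (eset M X ∩ eset M Y).card :=
        Nat.add_le_add_right (Finset.card_le_card h1) _

lemma edges_split (A B C : Finset V) (hBC : B ∩ C = A)
    (hfree : ∀ x ∈ B \ A, ∀ y ∈ C \ A, ¬ M.Adj x y)
    (X : Finset V) (hX : X ⊆ B ∪ C) :
    edgesIn M X + edgesIn M (X ∩ A) = edgesIn M (X ∩ B) + edgesIn M (X ∩ C) := by
  have hAB : A ⊆ B := hBC ▸ Finset.inter_subset_left
  have hAC : A ⊆ C := hBC ▸ Finset.inter_subset_right
  have hunion : eset M X = eset M (X ∩ B) ∪ eset M (X ∩ C) := by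
    apply Finset.Subset.antisymm
    · intro e he
      rw [eset, mem_filter] at he
      obtain ⟨he1, a, ha, b, hb, rfl⟩ := he
      have hadj : M.Adj a b := (M.mem_edgeSet).mp
        (SimpleGraph.mem_edgeFinset.mp he1)
      have hmem : ∀ {x y : V}, M.Adj x y → x ∈ X → y ∈ X → x ∈ B → y ∉ B →
          (x ∈ C) := by
        intro x y hxy hx hy hxB hyB
        by_contra hxC
        have hyC : y ∈ C := (Finset.mem_union.1 (hX hy)).resolve_left hyB
        exact hfree x (Finset.mem_sdiff.2 ⟨hxB, fun h => hxC (hAC h)⟩)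
          y (Finset.mem_sdiff.2 ⟨hyC, fun h => hyB (hAB h)⟩) hxy
      rw [Finset.mem_union]
      by_cases haB : a ∈ B
      · by_cases hbB : b ∈ B
        · exact Or.inl (by rw [eset, mem_filter]; exact ⟨he1, a,
            Finset.mem_inter.2 ⟨ha, haB⟩, b, Finset.mem_inter.2 ⟨hb, hbB⟩, rfl⟩)
        · have haC : a ∈ C := hmem hadj ha hb haB hbB
          have hbC : b ∈ C := (Finset.mem_union.1 (hX hb)).resolve_left hbB
          exact Or.inr (by rw [eset, mem_filter]; exact ⟨he1, a,
            Finset.mem_inter.2 ⟨ha, haC⟩, b, Finset.mem_inter.2 ⟨hb, hbC⟩, rfl⟩)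
      · have haC : a ∈ C := (Finset.mem_union.1 (hX ha)).resolve_left haB
        by_cases hbC : b ∈ C
        · exact Or.inr (by rw [eset, mem_filter]; exact ⟨he1, a,
            Finset.mem_inter.2 ⟨ha, haC⟩, b, Finset.mem_inter.2 ⟨hb, hbC⟩, rfl⟩)
        · have hbB : b ∈ B := (Finset.mem_union.1 (hX hb)).resolve_right hbC
          have haB' : a ∈ C := haC
          -- b ∈ B, a ∈ C, b ∉ C, a ∉ B : symmetric case, contradiction
          have := hmem hadj.symm hb ha hbB haB
          exact absurd this hbC
    · exact Finset.union_subset (eset_mono M Finset.inter_subset_left)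
        (eset_mono M Finset.inter_subset_left)
  have hinter : eset M (X ∩ B) ∩ eset M (X ∩ C) = eset M (X ∩ A) := by
    rw [← eset_inter]
    congr 1
    rw [Finset.inter_inter_inter_comm, Finset.inter_self, hBC]
  simp only [edgesIn_eq]
  rw [hunion, ← hinter]
  exact Finset.card_union_add_card_inter _ _

end Aux

section Aux2
variable {V : Type*} [Fintype V] [DecidableEq V] (M : SimpleGraph V) [DecidableRel M.Adj]

lemma card_split (A B C : Finset V) (hBC : B ∩ C = A)
    (X : Finset V) (hX : X ⊆ B ∪ C) :
    X.card + (X ∩ A).card = (X ∩ B).card + (X ∩ C).card := by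
  have hu : (X ∩ B) ∪ (X ∩ C) = X := by
    rw [← Finset.inter_union_distrib_left]
    exact Finset.inter_eq_left.2 hX
  have hi : (X ∩ B) ∩ (X ∩ C) = X ∩ A := by
    rw [Finset.inter_inter_inter_comm, Finset.inter_self, hBC]
  have := Finset.card_union_add_card_inter (X ∩ B) (X ∩ C)
  rw [hu, hi] at this
  omega

lemma predim_split (α : ℝ) (A B C : Finset V) (hBC : B ∩ C = A)
    (hfree : ∀ x ∈ B \ A, ∀ y ∈ C \ A, ¬ M.Adj x y)
    (X : Finset V) (hX : X ⊆ B ∪ C) :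
    predim M α X + predim M α (X ∩ A) = predim M α (X ∩ B) + predim M α (X ∩ C) := by
  have e1 := edges_split M A B C hBC hfree X hX
  have c1 := card_split A B C hBC X hX
  have e1' : (edgesIn M X : ℝ) + (edgesIn M (X ∩ A) : ℝ)
      = (edgesIn M (X ∩ B) : ℝ) + (edgesIn M (X ∩ C) : ℝ) := by exact_mod_cast e1
  have c1' : (X.card : ℝ) + ((X ∩ A).card : ℝ)
      = ((X ∩ B).card : ℝ) + ((X ∩ C).card : ℝ) := by exact_mod_cast c1
  simp only [predim]
  linear_combination α * c1' - e1'

lemma strongLe_inter (α : ℝ) (A C : Finset V) (hAC : strongLe M α A C)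
    (Y : Finset V) (hY : Y ⊆ C) : predim M α (Y ∩ A) ≤ predim M α Y := by
  have hsub := edges_submod M Y A
  have hsub' : (edgesIn M Y : ℝ) + (edgesIn M A : ℝ)
      ≤ (edgesIn M (Y ∪ A) : ℝ) + (edgesIn M (Y ∩ A) : ℝ) := by exact_mod_cast hsub
  have hc := Finset.card_union_add_card_inter Y A
  have hc' : ((Y ∪ A).card : ℝ) + ((Y ∩ A).card : ℝ)
      = (Y.card : ℝ) + (A.card : ℝ) := by exact_mod_cast hc
  have h3 : predim M α A ≤ predim M α (Y ∪ A) :=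
    hAC.2 (Y ∪ A) Finset.subset_union_right (Finset.union_subset hY hAC.1)
  have hcα : α * ((Y ∪ A).card : ℝ) + α * ((Y ∩ A).card : ℝ)
      = α * (Y.card : ℝ) + α * (A.card : ℝ) := by linear_combination α * hc'
  simp only [predim] at h3 ⊢
  linarith [hsub', h3, hcα]

end Aux2


/-- free amalgamation for `(K_α⁺, ≤_α)`.  The free amalgam
`D = B ⊗_A C` is realized inside an ambient graph `M`: `B ∩ C = A` and
there are no edges between `B \ A` and `C \ A`.  If all subgraphs of `B`
and of `C` have nonnegative `δ_α` and `A ≤_α B`, `A ≤_α C`, then all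
subgraphs of `D = B ∪ C` have nonnegative `δ_α` (so `D ∈ K_α⁺`) and
`B ≤_α D`, `C ≤_α D`. -/
theorem stmt14 {V : Type*} [Fintype V] [DecidableEq V] (M : SimpleGraph V)
    [DecidableRel M.Adj] (α : ℝ) (hα : 1 ≤ α) (A B C : Finset V)
    (hBC : B ∩ C = A)
    (hfree : ∀ x ∈ B \ A, ∀ y ∈ C \ A, ¬ M.Adj x y)
    (hKB : ∀ D : Finset V, D ⊆ B → 0 ≤ predim M α D)
    (hKC : ∀ D : Finset V, D ⊆ C → 0 ≤ predim M α D)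
    (hAB : strongLe M α A B) (hAC : strongLe M α A C) :
    (∀ D : Finset V, D ⊆ B ∪ C → 0 ≤ predim M α D) ∧
    strongLe M α B (B ∪ C) ∧ strongLe M α C (B ∪ C) := by
  have hAsubB : A ⊆ B := hAB.1
  have hAsubC : A ⊆ C := hAC.1
  refine ⟨?_, ⟨Finset.subset_union_left, ?_⟩, ⟨Finset.subset_union_right, ?_⟩⟩
  · intro D hD
    have hsplit := predim_split M α A B C hBC hfree D hD
    have hB0 : 0 ≤ predim M α (D ∩ B) := hKB _ Finset.inter_subset_right
    have key : predim M α ((D ∩ C) ∩ A) ≤ predim M α (D ∩ C) :=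
      strongLe_inter M α A C hAC (D ∩ C) Finset.inter_subset_right
    have hDA : (D ∩ C) ∩ A = D ∩ A := by
      rw [Finset.inter_assoc, Finset.inter_eq_right.2 hAsubC]
    rw [hDA] at key
    linarith
  · intro X hBX hX
    have hsplit := predim_split M α A B C hBC hfree X hX
    rw [Finset.inter_eq_right.2 hBX, Finset.inter_eq_right.2 (hAsubB.trans hBX)] at hsplit
    have key : predim M α A ≤ predim M α (X ∩ C) :=
      hAC.2 (X ∩ C) (Finset.subset_inter (hAsubB.trans hBX) hAsubC)
        Finset.inter_subset_right
    linarith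
  · intro X hCX hX
    have hsplit := predim_split M α A B C hBC hfree X hX
    rw [Finset.inter_eq_right.2 hCX, Finset.inter_eq_right.2 (hAsubC.trans hCX)] at hsplit
    have key : predim M α A ≤ predim M α (X ∩ B) :=
      hAB.2 (X ∩ B) (Finset.subset_inter (hAsubC.trans hCX) hAsubB)
        Finset.inter_subset_right
    linarith
end

section
/- Work with δ(X) = 2|X| − e(X). Let A be the triangle graph. Let B be the graph from the tree-pair construction: six disjoint triangles A_1,…,A_6 together with, for each 2-subset u = {u1,u2} of {1,…,6}, a cycle X_u of length m_u = 6·ζ(u) (ζ an injective enumeration into {1,…,15}) attached to A_{u1} ∪ A_{u2} by m_u edges as specified so that δ(X_u / A_{u1}A_{u2}) = −1 and δ(X' / A_{u1}A_{u2}) ≥ 0 for all proper nonempty X' ⊊ X_u. Then every subgraph B' of B containing all six A_i satisfies δ(B') ≥ 3. -/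
open Finset

def ES {V : Type*} [Fintype V] [DecidableEq V] (M : SimpleGraph V)
    [DecidableRel M.Adj] (Z : Finset V) : Finset (Sym2 V) :=
  M.edgeFinset.filter (fun e => ∃ a ∈ Z, ∃ b ∈ Z, e = s(a, b))

lemma mem_ES {V : Type*} [Fintype V] [DecidableEq V] {M : SimpleGraph V}
    [DecidableRel M.Adj] {Z : Finset V} {x y : V} :
    s(x, y) ∈ ES M Z ↔ M.Adj x y ∧ x ∈ Z ∧ y ∈ Z := by
  simp only [ES, Finset.mem_filter, SimpleGraph.mem_edgeFinset, SimpleGraph.mem_edgeSet]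
  constructor
  · rintro ⟨h, a, ha, b, hb, hab⟩
    rw [Sym2.eq_iff] at hab
    rcases hab with ⟨rfl, rfl⟩ | ⟨rfl, rfl⟩ <;> exact ⟨h, ‹_›, ‹_›⟩
  · rintro ⟨h, hx, hy⟩; exact ⟨h, x, hx, y, hy, rfl⟩

lemma exists_of_mem_ES {V : Type*} [Fintype V] [DecidableEq V] {M : SimpleGraph V}
    [DecidableRel M.Adj] {Z : Finset V} {e : Sym2 V} (he : e ∈ ES M Z) :
    ∃ x y, e = s(x, y) ∧ M.Adj x y ∧ x ∈ Z ∧ y ∈ Z := by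
  revert he
  induction e using Sym2.inductionOn with
  | hf x y => intro he; rw [mem_ES] at he; exact ⟨x, y, rfl, he.1, he.2.1, he.2.2⟩

lemma ES_mono {V : Type*} [Fintype V] [DecidableEq V] (M : SimpleGraph V)
    [DecidableRel M.Adj] {Z W : Finset V} (h : Z ⊆ W) : ES M Z ⊆ ES M W := by
  intro e he
  obtain ⟨x, y, rfl, hadj, hx, hy⟩ := exists_of_mem_ES he
  exact mem_ES.2 ⟨hadj, h hx, h hy⟩

lemma ES_disjoint {V : Type*} [Fintype V] [DecidableEq V] (M : SimpleGraph V)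
    [DecidableRel M.Adj] {Z W : Finset V} (h : Disjoint Z W) :
    Disjoint (ES M Z) (ES M W) := by
  rw [Finset.disjoint_left]
  intro e heZ heW
  obtain ⟨x, y, rfl, _, hx, _⟩ := exists_of_mem_ES heZ
  obtain ⟨_, hx', _⟩ := mem_ES.1 heW
  exact Finset.disjoint_left.1 h hx hx'

lemma edgesIn_eq_s18 {V : Type*} [Fintype V] [DecidableEq V] (M : SimpleGraph V)
    [DecidableRel M.Adj] (Z : Finset V) : edgesIn M Z = (ES M Z).card := rfl

/-- in the tree-pair graph `B` (six disjoint triangles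
`A 0, …, A 5`, and for each pair `i < j` an attached cycle `X i j` with
`δ(X i j / A i ∪ A j) = −1` and `δ(X' / A i ∪ A j) ≥ 0` for all proper
nonempty `X' ⊊ X i j`, the only edges being inside the triangles or involving
the attached cycles), every subgraph `B'` of `B` containing all six triangles
satisfies `δ(B') ≥ 3`. -/
theorem stmt18 {V : Type*} [Fintype V] [DecidableEq V] (M : SimpleGraph V)
    [DecidableRel M.Adj] (A : Fin 6 → Finset V) (X : Fin 6 → Fin 6 → Finset V)
    (B : Finset V)
    (hAdisj : ∀ i j, i ≠ j → Disjoint (A i) (A j))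
    (hXA : ∀ i j k, i < j → Disjoint (X i j) (A k))
    (hXX : ∀ i j i' j', i < j → i' < j' → (i, j) ≠ (i', j') →
      Disjoint (X i j) (X i' j'))
    (hB : B = (Finset.univ.biUnion A) ∪
      ((Finset.univ.filter (fun p : Fin 6 × Fin 6 => p.1 < p.2)).biUnion
        fun p => X p.1 p.2))
    (hδA : ∀ i, predim2 M (A i) = 3)
    (hrel : ∀ i j, i < j →
      predim2 M (X i j ∪ A i ∪ A j) - predim2 M (A i ∪ A j) = -1)
    (hrel' : ∀ i j, i < j → ∀ X' : Finset V, X'.Nonempty → X' ⊂ X i j →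
      0 ≤ predim2 M (X' ∪ A i ∪ A j) - predim2 M (A i ∪ A j))
    (hedges : ∀ x y, M.Adj x y → x ∈ B → y ∈ B →
      (∃ i, x ∈ A i ∧ y ∈ A i) ∨
      (∃ i j, i < j ∧ x ∈ X i j ∪ A i ∪ A j ∧ y ∈ X i j ∪ A i ∪ A j ∧
        (x ∈ X i j ∨ y ∈ X i j))) :
    ∀ B' : Finset V, (∀ i, A i ⊆ B') → B' ⊆ B → 3 ≤ predim2 M B' := by
  classical
  intro B' hA hB'B
  set S : Finset (Fin 6 × Fin 6) :=
    Finset.univ.filter (fun p : Fin 6 × Fin 6 => p.1 < p.2) with hSdef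
  have hSmem : ∀ p : Fin 6 × Fin 6, p ∈ S ↔ p.1 < p.2 := by
    intro p; simp [hSdef]
  have hScard : S.card = 15 := by rw [hSdef]; decide
  set Y : Fin 6 × Fin 6 → Finset V := fun p => B' ∩ X p.1 p.2 with hYdef
  have hYsub : ∀ p, Y p ⊆ X p.1 p.2 := fun p => inter_subset_right
  have hYB' : ∀ p, Y p ⊆ B' := fun p => inter_subset_left
  have hYA : ∀ p ∈ S, ∀ k, Disjoint (Y p) (A k) := fun p hp k =>
    (hXA p.1 p.2 k ((hSmem p).1 hp)).mono_left (hYsub p)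
  have hYY : ∀ p ∈ S, ∀ q ∈ S, p ≠ q → Disjoint (Y p) (Y q) := by
    intro p hp q hq hpq
    exact (hXX p.1 p.2 q.1 q.2 ((hSmem p).1 hp) ((hSmem q).1 hq)
      (by simpa using hpq)).mono (hYsub p) (hYsub q)
  have hXnA : ∀ p ∈ S, ∀ z ∈ X p.1 p.2, ∀ k, z ∉ A k := fun p hp z hz k hzk =>
    Finset.disjoint_left.1 (hXA p.1 p.2 k ((hSmem p).1 hp)) hz hzk
  have hXuniq : ∀ p ∈ S, ∀ q ∈ S, ∀ z, z ∈ X p.1 p.2 → z ∈ X q.1 q.2 → p = q := by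
    intro p hp q hq z hzp hzq
    by_contra h
    exact Finset.disjoint_left.1 (hXX p.1 p.2 q.1 q.2 ((hSmem p).1 hp)
      ((hSmem q).1 hq) (by simpa using h)) hzp hzq
  -- vertex decomposition
  have hBmem : ∀ v ∈ B, (∃ i, v ∈ A i) ∨ ∃ p ∈ S, v ∈ X p.1 p.2 := by
    intro v hv
    rw [hB] at hv
    rcases mem_union.1 hv with h | h
    · obtain ⟨i, _, hi⟩ := mem_biUnion.1 h; exact Or.inl ⟨i, hi⟩
    · obtain ⟨p, hp, hvp⟩ := mem_biUnion.1 h; exact Or.inr ⟨p, hp, hvp⟩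
  have hB'eq : B' = Finset.univ.biUnion A ∪ S.biUnion Y := by
    apply Finset.Subset.antisymm
    · intro v hv
      rcases hBmem v (hB'B hv) with ⟨i, hi⟩ | ⟨p, hp, hvp⟩
      · exact mem_union_left _ (mem_biUnion.2 ⟨i, mem_univ i, hi⟩)
      · exact mem_union_right _ (mem_biUnion.2 ⟨p, hp, mem_inter.2 ⟨hv, hvp⟩⟩)
    · exact union_subset (biUnion_subset.2 fun i _ => hA i)
        (biUnion_subset.2 fun p _ => hYB' p)
  have hdisjU : Disjoint (Finset.univ.biUnion A) (S.biUnion Y) := by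
    rw [Finset.disjoint_biUnion_left]
    intro i _
    rw [Finset.disjoint_biUnion_right]
    exact fun p hp => (hYA p hp i).symm
  have hcardB' : B'.card = (∑ i, (A i).card) + ∑ p ∈ S, (Y p).card := by
    rw [hB'eq, card_union_of_disjoint hdisjU,
      card_biUnion (fun i _ j _ hij => hAdisj i j hij),
      card_biUnion (fun p hp q hq hpq => hYY p hp q hq hpq)]
  -- edge decomposition
  set T : Fin 6 × Fin 6 → Finset (Sym2 V) :=
    fun p => ES M (Y p ∪ A p.1 ∪ A p.2) \ (ES M (A p.1) ∪ ES M (A p.2)) with hTdef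
  have hWB' : ∀ p, Y p ∪ A p.1 ∪ A p.2 ⊆ B' := fun p =>
    union_subset (union_subset (hYB' p) (hA p.1)) (hA p.2)
  -- every edge of T p has an endpoint in Y p, other endpoint in W p
  have hTchar : ∀ p ∈ S, ∀ e ∈ T p, ∃ x y, e = s(x, y) ∧ M.Adj x y ∧
      x ∈ Y p ∧ y ∈ Y p ∪ A p.1 ∪ A p.2 := by
    intro p hp e he
    rw [hTdef, mem_sdiff] at he
    obtain ⟨x, y, rfl, hadj, hx, hy⟩ := exists_of_mem_ES he.1
    have hxB : x ∈ B := hB'B (hWB' p hx)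
    have hyB : y ∈ B := hB'B (hWB' p hy)
    have hmemY : ∀ z, z ∈ Y p ∪ A p.1 ∪ A p.2 → (∀ k, z ∉ A k) → z ∈ Y p := by
      intro z hz hzA
      rcases mem_union.1 hz with h | h
      · rcases mem_union.1 h with h' | h'
        · exact h'
        · exact absurd h' (hzA p.1)
      · exact absurd h (hzA p.2)
    rcases hedges x y hadj hxB hyB with ⟨k, hxk, hyk⟩ | ⟨i, j, hij, hxW, hyW, hxy⟩
    · -- both endpoints in A k: contradicts sdiff
      exfalso
      have hk : k = p.1 ∨ k = p.2 := by
        rcases mem_union.1 hx with h | h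
        · rcases mem_union.1 h with h' | h'
          · exact absurd hxk (Finset.disjoint_left.1 (hYA p hp k) h')
          · left; by_contra hne
            exact Finset.disjoint_left.1 (hAdisj k p.1 (Ne.symm (Ne.intro (fun a => hne a.symm)))) hxk h'
        · right; by_contra hne
          exact Finset.disjoint_left.1 (hAdisj k p.2 (fun a => hne a)) hxk h
      rcases hk with rfl | rfl
      · exact he.2 (mem_union_left _ (mem_ES.2 ⟨hadj, hxk, hyk⟩))
      · exact he.2 (mem_union_right _ (mem_ES.2 ⟨hadj, hxk, hyk⟩))
    · have hq : (i, j) ∈ S := (hSmem (i, j)).2 hij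
      rcases hxy with hxX | hyX
      · exact ⟨x, y, rfl, hadj, hmemY x hx (fun k => hXnA (i, j) hq x hxX k), hy⟩
      · exact ⟨y, x, Sym2.eq_swap, hadj.symm,
          hmemY y hy (fun k => hXnA (i, j) hq y hyX k), hx⟩
  have hTA : ∀ p ∈ S, ∀ k, Disjoint (T p) (ES M (A k)) := by
    intro p hp k
    rw [Finset.disjoint_left]
    intro e heT heA
    obtain ⟨x, y, rfl, _, hxY, _⟩ := hTchar p hp e heT
    obtain ⟨_, hxA, _⟩ := mem_ES.1 heA
    exact Finset.disjoint_left.1 (hYA p hp k) hxY hxA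
  have hTT : ∀ p ∈ S, ∀ q ∈ S, p ≠ q → Disjoint (T p) (T q) := by
    intro p hp q hq hpq
    rw [Finset.disjoint_left]
    intro e heP heQ
    obtain ⟨x, y, rfl, _, hxY, _⟩ := hTchar p hp e heP
    have heQ' : s(x, y) ∈ ES M (Y q ∪ A q.1 ∪ A q.2) := (mem_sdiff.1 heQ).1
    obtain ⟨_, hxW, _⟩ := mem_ES.1 heQ'
    have hxX : x ∈ X p.1 p.2 := hYsub p hxY
    rcases mem_union.1 hxW with h | h
    · rcases mem_union.1 h with h' | h'
      · exact hpq (hXuniq p hp q hq x hxX (hYsub q h'))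
      · exact hXnA p hp x hxX q.1 h'
    · exact hXnA p hp x hxX q.2 h
  have hEcov : ES M B' = (Finset.univ.biUnion fun i => ES M (A i)) ∪ S.biUnion T := by
    apply Finset.Subset.antisymm
    · intro e he
      obtain ⟨x, y, rfl, hadj, hx, hy⟩ := exists_of_mem_ES he
      rcases hedges x y hadj (hB'B hx) (hB'B hy) with
        ⟨k, hxk, hyk⟩ | ⟨i, j, hij, hxW, hyW, hxy⟩
      · exact mem_union_left _ (mem_biUnion.2 ⟨k, mem_univ k, mem_ES.2 ⟨hadj, hxk, hyk⟩⟩)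
      · have hpS : (i, j) ∈ S := (hSmem (i, j)).2 hij
        have hconv : ∀ z, z ∈ B' → z ∈ X i j ∪ A i ∪ A j →
            z ∈ Y (i, j) ∪ A i ∪ A j := by
          intro z hzB hz
          rcases mem_union.1 hz with h | h
          · rcases mem_union.1 h with h' | h'
            · exact mem_union_left _ (mem_union_left _ (mem_inter.2 ⟨hzB, h'⟩))
            · exact mem_union_left _ (mem_union_right _ h')
          · exact mem_union_right _ h
        have hnot : s(x, y) ∉ ES M (A i) ∪ ES M (A j) := by
          intro hmem
          rcases mem_union.1 hmem with h | h <;>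
            obtain ⟨_, hxa, hya⟩ := mem_ES.1 h <;>
            rcases hxy with hX | hX
          · exact hXnA (i, j) hpS x hX i hxa
          · exact hXnA (i, j) hpS y hX i hya
          · exact hXnA (i, j) hpS x hX j hxa
          · exact hXnA (i, j) hpS y hX j hya
        exact mem_union_right _ (mem_biUnion.2 ⟨(i, j), hpS, mem_sdiff.2
          ⟨mem_ES.2 ⟨hadj, hconv x hx hxW, hconv y hy hyW⟩, hnot⟩⟩)
    · refine union_subset (biUnion_subset.2 fun i _ => ES_mono M (hA i))
        (biUnion_subset.2 fun p _ => ?_)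
      exact sdiff_subset.trans (ES_mono M (hWB' p))
  have hdisjE : Disjoint (Finset.univ.biUnion fun i => ES M (A i)) (S.biUnion T) := by
    rw [Finset.disjoint_biUnion_left]
    intro i _
    rw [Finset.disjoint_biUnion_right]
    exact fun p hp => (hTA p hp i).symm
  have hcardE : (ES M B').card = (∑ i, (ES M (A i)).card) + ∑ p ∈ S, (T p).card := by
    rw [hEcov, card_union_of_disjoint hdisjE,
      card_biUnion (fun i _ j _ hij => ES_disjoint M (hAdisj i j hij)),
      card_biUnion (fun p hp q hq hpq => hTT p hp q hq hpq)]
  -- per-pair counts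
  have hne12 : ∀ p ∈ S, p.1 ≠ p.2 := fun p hp => ne_of_lt ((hSmem p).1 hp)
  have hEW : ∀ p ∈ S, (ES M (Y p ∪ A p.1 ∪ A p.2)).card =
      (T p).card + ((ES M (A p.1)).card + (ES M (A p.2)).card) := by
    intro p hp
    have hsub : ES M (A p.1) ∪ ES M (A p.2) ⊆ ES M (Y p ∪ A p.1 ∪ A p.2) :=
      union_subset (ES_mono M (subset_union_right.trans subset_union_left))
        (ES_mono M subset_union_right)
    rw [← Finset.card_sdiff_add_card_eq_card hsub,
      card_union_of_disjoint (ES_disjoint M (hAdisj p.1 p.2 (hne12 p hp)))]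
  have hEAAset : ∀ p ∈ S, ES M (A p.1 ∪ A p.2) = ES M (A p.1) ∪ ES M (A p.2) := by
    intro p hp
    apply Finset.Subset.antisymm
    · intro e he
      obtain ⟨x, y, rfl, hadj, hx, hy⟩ := exists_of_mem_ES he
      have hxB : x ∈ B := hB'B ((union_subset (hA p.1) (hA p.2)) hx)
      have hyB : y ∈ B := hB'B ((union_subset (hA p.1) (hA p.2)) hy)
      rcases hedges x y hadj hxB hyB with ⟨k, hxk, hyk⟩ | ⟨i, j, hij, hxW, hyW, hxy⟩
      · have hk : k = p.1 ∨ k = p.2 := by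
          rcases mem_union.1 hx with h | h
          · left; by_contra hne
            exact Finset.disjoint_left.1 (hAdisj k p.1 (fun a => hne a)) hxk h
          · right; by_contra hne
            exact Finset.disjoint_left.1 (hAdisj k p.2 (fun a => hne a)) hxk h
        rcases hk with rfl | rfl
        · exact mem_union_left _ (mem_ES.2 ⟨hadj, hxk, hyk⟩)
        · exact mem_union_right _ (mem_ES.2 ⟨hadj, hxk, hyk⟩)
      · exfalso
        have hq : (i, j) ∈ S := (hSmem (i, j)).2 hij
        rcases hxy with hX | hX
        · rcases mem_union.1 hx with h | h
          · exact hXnA (i, j) hq x hX p.1 h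
          · exact hXnA (i, j) hq x hX p.2 h
        · rcases mem_union.1 hy with h | h
          · exact hXnA (i, j) hq y hX p.1 h
          · exact hXnA (i, j) hq y hX p.2 h
    · exact union_subset (ES_mono M subset_union_left) (ES_mono M subset_union_right)
  have hEAA : ∀ p ∈ S, (ES M (A p.1 ∪ A p.2)).card =
      (ES M (A p.1)).card + (ES M (A p.2)).card := by
    intro p hp
    rw [hEAAset p hp,
      card_union_of_disjoint (ES_disjoint M (hAdisj p.1 p.2 (hne12 p hp)))]
  have hcardAA : ∀ p ∈ S, (A p.1 ∪ A p.2).card = (A p.1).card + (A p.2).card :=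
    fun p hp => card_union_of_disjoint (hAdisj p.1 p.2 (hne12 p hp))
  have hcardW : ∀ p ∈ S, (Y p ∪ A p.1 ∪ A p.2).card =
      (Y p).card + (A p.1).card + (A p.2).card := by
    intro p hp
    rw [card_union_of_disjoint
      (Finset.disjoint_union_left.2 ⟨hYA p hp p.2, hAdisj p.1 p.2 (hne12 p hp)⟩),
      card_union_of_disjoint (hYA p hp p.1)]
  -- assemble
  have hpdB' : predim2 M B' = 2 * (B'.card : ℝ) - ((ES M B').card : ℝ) := rfl
  have hC1 : (B'.card : ℝ) = (∑ i, ((A i).card : ℝ)) + ∑ p ∈ S, ((Y p).card : ℝ) := by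
    exact_mod_cast hcardB'
  have hE1 : ((ES M B').card : ℝ) =
      (∑ i, ((ES M (A i)).card : ℝ)) + ∑ p ∈ S, ((T p).card : ℝ) := by
    exact_mod_cast hcardE
  have hsumA : ∑ i, predim2 M (A i) =
      2 * (∑ i, ((A i).card : ℝ)) - ∑ i, ((ES M (A i)).card : ℝ) := by
    simp only [predim2, edgesIn_eq_s18]
    rw [Finset.sum_sub_distrib, Finset.mul_sum]
  have hsumP : ∑ p ∈ S, (predim2 M (Y p ∪ A p.1 ∪ A p.2) - predim2 M (A p.1 ∪ A p.2)) =
      2 * (∑ p ∈ S, ((Y p).card : ℝ)) - ∑ p ∈ S, ((T p).card : ℝ) := by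
    rw [Finset.mul_sum, ← Finset.sum_sub_distrib]
    refine Finset.sum_congr rfl fun p hp => ?_
    simp only [predim2, edgesIn_eq_s18]
    rw [hcardW p hp, hEW p hp, hcardAA p hp, hEAA p hp]
    push_cast
    ring
  have hfinal : predim2 M B' = (∑ i, predim2 M (A i)) +
      ∑ p ∈ S, (predim2 M (Y p ∪ A p.1 ∪ A p.2) - predim2 M (A p.1 ∪ A p.2)) := by
    rw [hpdB', hC1, hE1, hsumA, hsumP]; ring
  have h18 : ∑ i, predim2 M (A i) = 18 := by
    simp [hδA]
    norm_num
  have hbound : ∀ p ∈ S, (-1 : ℝ) ≤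
      predim2 M (Y p ∪ A p.1 ∪ A p.2) - predim2 M (A p.1 ∪ A p.2) := by
    intro p hp
    by_cases hYe : Y p = X p.1 p.2
    · rw [hYe]; exact le_of_eq (hrel p.1 p.2 ((hSmem p).1 hp)).symm
    by_cases hY0 : Y p = ∅
    · rw [hY0, Finset.empty_union, sub_self]; norm_num
    · have hne : (Y p).Nonempty := Finset.nonempty_iff_ne_empty.2 hY0
      have hss : Y p ⊂ X p.1 p.2 := Finset.ssubset_iff_subset_ne.2 ⟨hYsub p, hYe⟩
      linarith [hrel' p.1 p.2 ((hSmem p).1 hp) (Y p) hne hss]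
  have hsumbound : (-15 : ℝ) ≤
      ∑ p ∈ S, (predim2 M (Y p ∪ A p.1 ∪ A p.2) - predim2 M (A p.1 ∪ A p.2)) := by
    have := Finset.sum_le_sum hbound
    rw [Finset.sum_const, hScard] at this
    simpa using this
  rw [hfinal, h18]
  linarith
end
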